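/- Let T be a complete first-order theory, A ⊆ B ⊆ C sets of parameters with C contained in a model of T, let p and q be complete types over C, and let r be a set of formulas with parameters in A in the variables of p and q jointly, such that p ∪ r is satisfiable and p ∪ r entails q. Then (p↾B) ∪ r entails q↾B, where p↾B denotes the restriction of p to formulas with parameters in B. -/

import Mathlib

/-!
By compactness, finitely many formulas `r₀ ⊆ r` already give `p ∪ r₀ ⊢ φ` for a given
`φ ∈ q↾B`. The formula `θ(x) = ∀ y, (⋀ r₀(x, y)) → φ(y)` has parameters in `B` and holds at every
realization of `p`; since `p` is complete over `C ⊇ B` and satisfiable, `θ ∈ p↾B`, and `θ`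
together with `r` yields `φ`.

Compactness only yields nonempty models, and the quantification in `θ` needs them; a `y`-variable
makes every model nonempty. Without `y`-variables, `φ` is a formula over `U` and its truth simply
transfers along elementary embeddings.
-/

open FirstOrder FirstOrder.Language

universe u v w u' v' x

namespace FirstOrder.Language

variable {L : Language.{u, v}}

namespace BoundedFormula

variable {α β γ : Type*}

theorem relabelAux_inl_comp_relabelAux_inl (f : α → β) (g : β → γ) (n : ℕ) :
    relabelAux (Sum.inl ∘ g) (0 + n) ∘ relabelAux (Sum.inl ∘ f) n =
      Sum.map id (Fin.castLE (by omega : 0 + n ≤ 0 + (0 + n))) ∘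
        relabelAux (Sum.inl ∘ (g ∘ f)) n := by
  funext a
  rcases a with a | i
  · rfl
  · simp [relabelAux, Fin.ext_iff]

theorem relabel_inl_relabel_inl {k : ℕ} (φ : L.BoundedFormula α k) (f : α → β) (g : β → γ) :
    (φ.relabel (Sum.inl ∘ f)).relabel (Sum.inl ∘ g) =
      (φ.relabel (Sum.inl ∘ (g ∘ f))).castLE (by omega : 0 + k ≤ 0 + (0 + k)) := by
  induction φ with
  | falsum => rfl
  | equal t₁ t₂ =>
    simp only [relabel, mapTermRel, castLE, Term.relabel_relabel,
      relabelAux_inl_comp_relabelAux_inl]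
  | rel R ts =>
    simp only [relabel, mapTermRel, castLE, id]
    congr 1
    funext i
    simp only [Function.comp_apply, Term.relabel_relabel, relabelAux_inl_comp_relabelAux_inl]
  | imp φ₁ φ₂ ih₁ ih₂ => simp only [relabel_imp, castLE, ih₁, ih₂]
  | all φ ih => simp only [relabel_all, castLE, ih]

end BoundedFormula

namespace Formula

variable {α β γ X Y Z P Q : Type*}

theorem relabel_relabel (f : α → β) (g : β → γ) (φ : L.Formula α) :
    (φ.relabel f).relabel g = φ.relabel (g ∘ f) := by
  simpa [Formula.relabel, BoundedFormula.castLE_rfl] using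
    BoundedFormula.relabel_inl_relabel_inl (k := 0) φ f g

theorem realize_relabel_sumMap_id {M : Type*} [L.Structure M] (φ : L.Formula (X ⊕ P))
    (ι : P → Q) (x : X → M) (q : Q → M) :
    (φ.relabel (Sum.map id ι)).Realize (Sum.elim x q) ↔ φ.Realize (Sum.elim x (q ∘ ι)) := by
  rw [realize_relabel, Sum.elim_comp_map, Function.comp_id]

theorem relabel_sumMap_inclusion {U : Type*} {A B : Set U} (h : A ⊆ B)
    (φ : L.Formula (X ⊕ A)) :
    (φ.relabel (Sum.map id (Set.inclusion h))).relabel (Sum.map id Subtype.val) =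
      φ.relabel (Sum.map id Subtype.val) := by
  rw [relabel_relabel, Sum.map_comp_map, Function.id_comp, Set.val_comp_inclusion]

theorem subset_image_preimage_relabel {U : Type*} {A B : Set U} (h : A ⊆ B)
    {r : Set (L.Formula (X ⊕ U))}
    (hr : ∀ φ ∈ r, ∃ ψ : L.Formula (X ⊕ A), φ = ψ.relabel (Sum.map id Subtype.val)) :
    r ⊆ relabel (Sum.map id Subtype.val) ''
      (relabel (Sum.map id (Subtype.val : B → U)) ⁻¹' r) := by
  intro φ hφ
  obtain ⟨ψ, rfl⟩ := hr φ hφ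
  refine ⟨ψ.relabel (Sum.map id (Set.inclusion h)), ?_, relabel_sumMap_inclusion h ψ⟩
  rw [Set.mem_preimage, relabel_sumMap_inclusion h ψ]
  exact hφ

theorem relabel_mem_of_realize {M : Type*} [L.Structure M] {p : Set (L.Formula Y)}
    {ι : Z → Y} (hcomp : ∀ ψ : L.Formula Z, ψ.relabel ι ∈ p ∨ ψ.not.relabel ι ∈ p)
    {y : Y → M} (hp : ∀ φ ∈ p, φ.Realize y) {ψ : L.Formula Z} (hψ : (ψ.relabel ι).Realize y) :
    ψ.relabel ι ∈ p :=
  (hcomp ψ).resolve_right fun hnot => by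
    simp only [realize_relabel] at hψ
    simpa [hψ] using hp _ hnot

/-- Only the finitely many `Sum.inr` variables occurring in `φ` are quantified; this is why
`realize_allsInr` needs a nonempty structure. -/
noncomputable def allsInr (φ : L.Formula (X ⊕ Y)) : L.Formula X :=
  open scoped Classical in
  iAlls φ.freeVarFinset <|
    Formula.relabel (fun a => a.1.elim Sum.inl fun _ => Sum.inr a) (φ.restrictFreeVar id)

theorem realize_allsInr {M : Type*} [L.Structure M] [Nonempty M] (φ : L.Formula (X ⊕ Y))
    (v : X → M) : φ.allsInr.Realize v ↔ ∀ w : Y → M, φ.Realize (Sum.elim v w) := by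
  classical
  rw [allsInr, realize_iAlls]
  simp only [realize_relabel]
  constructor
  · intro h w
    refine (BoundedFormula.realize_restrictFreeVar (Sum.elim v w) ?_).1
      (h fun a => Sum.elim v w a)
    rintro ⟨x | y, _⟩ <;> rfl
  · intro h i
    let w (y : Y) : M :=
      if hy : Sum.inr y ∈ φ.freeVarFinset then i ⟨_, hy⟩ else Classical.arbitrary M
    refine (BoundedFormula.realize_restrictFreeVar (Sum.elim v w) ?_).2 (h w)
    rintro ⟨x | y, hy⟩
    · rfl
    · simp [w, hy]

noncomputable def forallConjImp (s : Finset (L.Formula ((α ⊕ β) ⊕ P)))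
    (ψ : L.Formula (β ⊕ P)) : L.Formula (α ⊕ P) :=
  allsInr <| Formula.relabel (Sum.elim (Sum.elim (Sum.inl ∘ Sum.inl) Sum.inr) (Sum.inl ∘ Sum.inr))
    ((iInf fun ρ : s => ρ.1).imp (ψ.relabel (Sum.map Sum.inr id)))

theorem realize_forallConjImp {M : Type*} [L.Structure M] [Nonempty M]
    (s : Finset (L.Formula ((α ⊕ β) ⊕ P))) (ψ : L.Formula (β ⊕ P)) (v : α → M) (b : P → M) :
    (forallConjImp s ψ).Realize (Sum.elim v b) ↔
      ∀ w : β → M, (∀ ρ ∈ s, ρ.Realize (Sum.elim (Sum.elim v w) b)) →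
        ψ.Realize (Sum.elim w b) := by
  rw [forallConjImp, realize_allsInr]
  refine forall_congr' fun w => ?_
  have hvar : Sum.elim (Sum.elim v b) w ∘
      Sum.elim (Sum.elim (Sum.inl ∘ Sum.inl) Sum.inr) (Sum.inl ∘ Sum.inr) =
        Sum.elim (Sum.elim v w) b := by
    ext ((a | y) | p) <;> rfl
  simp only [realize_relabel, realize_imp, realize_iInf, Subtype.forall, hvar, Sum.elim_comp_map,
    Function.comp_id, Sum.elim_comp_inr]

end Formula

section Realizability

variable {Y : Type x}

def IsRealized (Γ : Set (L.Formula Y)) : Prop :=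
  ∃ (M : Type (max u v x)) (_ : L.Structure M) (_ : Nonempty M) (y : Y → M),
    ∀ φ ∈ Γ, φ.Realize y

theorem IsRealized.mono {Γ₁ Γ₂ : Set (L.Formula Y)} (h : IsRealized Γ₂) (hsub : Γ₁ ⊆ Γ₂) :
    IsRealized Γ₁ := by
  obtain ⟨M, _, _, y, hy⟩ := h
  exact ⟨M, ‹_›, ‹_›, y, fun φ hφ => hy φ (hsub hφ)⟩

theorem isRealized_iff_isSatisfiable (Γ : Set (L.Formula Y)) :
    IsRealized Γ ↔ Theory.IsSatisfiable (Formula.equivSentence '' Γ : L[[Y]].Theory) := by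
  constructor
  · rintro ⟨M, _, _, y, hy⟩
    let _ := constantsOn.structure y
    have : M ⊨ (Formula.equivSentence '' Γ : L[[Y]].Theory) := by
      refine (Theory.model_iff _).2 ?_
      rintro _ ⟨φ, hφ, rfl⟩
      exact (Formula.realize_equivSentence M φ).2 (hy φ hφ)
    exact Theory.Model.isSatisfiable M
  · rintro ⟨M⟩
    let _ : L.Structure M := (L.lhomWithConstants Y).reduct M
    have := LHom.isExpansionOn_reduct (L.lhomWithConstants Y) M
    refine ⟨M, ‹_›, inferInstance, fun a => (L.con a : M), fun φ hφ => ?_⟩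
    exact (Formula.realize_equivSentence M φ).1
      (Theory.realize_sentence_of_mem _ (Set.mem_image_of_mem _ hφ))

theorem isRealized_of_forall_finset {Γ : Set (L.Formula Y)}
    (h : ∀ Θ : Finset (L.Formula Y), ↑Θ ⊆ Γ → IsRealized (Θ : Set (L.Formula Y))) :
    IsRealized Γ := by
  classical
  rw [isRealized_iff_isSatisfiable, Theory.isSatisfiable_iff_isFinitelySatisfiable]
  intro T₀ hT₀
  obtain ⟨Θ, hΘ, rfl⟩ := Finset.subset_set_image_iff.1 hT₀
  rw [Finset.coe_image, ← isRealized_iff_isSatisfiable]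
  exact h Θ hΘ

end Realizability

section OverModel

variable {U : Type w} [L.Structure U]

theorem ElementaryEmbedding.realize_sumElim_of_isEmpty {X M : Type*} [L.Structure M] [IsEmpty X]
    (g : U ↪ₑ[L] M) (x : X → M) (φ : L.Formula (X ⊕ U)) :
    φ.Realize (Sum.elim x g) ↔ φ.Realize (Sum.elim (isEmptyElim : X → U) id) := by
  have hx : Sum.elim x g = g ∘ Sum.elim (isEmptyElim : X → U) id := by
    ext (a | _)
    · exact isEmptyElim a
    · rfl
  rw [hx, g.map_formula]

def ElementaryEmbedding.ofRealize {M : Type*} [L.Structure M] (g : U → M)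
    (hg : ∀ φ : L.Formula U, φ.Realize id → φ.Realize g) : U ↪ₑ[L] M where
  toFun := g
  map_formula' n φ x := by
    refine ⟨fun h => by_contra fun hx => ?_, fun h => ?_⟩
    · simpa [h] using hg (φ.not.relabel x) (by simpa using hx)
    · simpa using hg (φ.relabel x) (by simpa using h)

variable {X : Type x}

variable (U X) in
def elementaryDiagramFormulas : Set (L.Formula (X ⊕ U)) :=
  Formula.relabel Sum.inr '' {φ : L.Formula U | φ.Realize id}

def IsRealizedOver (Γ : Set (L.Formula (X ⊕ U))) : Prop :=
  ∃ (M : Type (max u v w x)) (_ : L.Structure M) (_ : Nonempty M) (g : U ↪ₑ[L] M) (x : X → M),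
    ∀ φ ∈ Γ, φ.Realize (Sum.elim x g)

theorem isRealizedOver_iff {Γ : Set (L.Formula (X ⊕ U))} :
    IsRealizedOver Γ ↔ IsRealized (elementaryDiagramFormulas U X ∪ Γ) := by
  constructor
  · rintro ⟨M, _, _, g, x, hx⟩
    refine ⟨M, ‹_›, ‹_›, Sum.elim x g, ?_⟩
    rintro _ (⟨φ, hφ, rfl⟩ | hφ)
    · rw [Formula.realize_relabel, Sum.elim_comp_inr]
      simpa using (g.map_formula φ id).2 hφ
    · exact hx _ hφ
  · rintro ⟨M, _, _, y, hy⟩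
    let g := ElementaryEmbedding.ofRealize (y ∘ Sum.inr) fun φ hφ => by
      simpa using hy _ (Or.inl ⟨φ, hφ, rfl⟩)
    refine ⟨M, ‹_›, ‹_›, g, y ∘ Sum.inl, fun φ hφ => ?_⟩
    rw [show (⇑g : U → M) = y ∘ Sum.inr from rfl, Sum.elim_comp_inl_inr]
    exact hy φ (Or.inr hφ)

theorem exists_finset_not_isRealizedOver {Γ Δ : Set (L.Formula (X ⊕ U))}
    (h : ¬ IsRealizedOver (Γ ∪ Δ)) :
    ∃ Δ₀ : Finset (L.Formula (X ⊕ U)), ↑Δ₀ ⊆ Δ ∧ ¬ IsRealizedOver (Γ ∪ ↑Δ₀) := by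
  classical
  by_contra! hfin
  refine h (isRealizedOver_iff.2 (isRealized_of_forall_finset fun Θ hΘ => ?_))
  refine (isRealizedOver_iff.1 (hfin (Θ.filter (· ∈ Δ))
    fun _ hφ => (Finset.mem_filter.1 hφ).2)).mono fun φ hφ => ?_
  rcases hΘ hφ with hD | hΓ | hΔ
  · exact Or.inl hD
  · exact Or.inr (Or.inl hΓ)
  · exact Or.inr (Or.inr (Finset.mem_filter.2 ⟨hφ, hΔ⟩))

end OverModel

section Entailment

variable {U : Type w} [L.Structure U] {α : Type u'} {β : Type v'}

/-- `p(x) ∪ r(x, y) ⊢ φ(y)`. -/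
def Entails (p : Set (L.Formula (α ⊕ U))) (r : Set (L.Formula ((α ⊕ β) ⊕ U)))
    (φ : L.Formula (β ⊕ U)) : Prop :=
  ∀ (M : Type (max u v w u' v')) [L.Structure M] [Nonempty M] (g : U ↪ₑ[L] M) (v : α → M)
    (w : β → M), (∀ χ ∈ p, χ.Realize (Sum.elim v g)) →
      (∀ ρ ∈ r, ρ.Realize (Sum.elim (Sum.elim v w) g)) → φ.Realize (Sum.elim w g)

theorem Entails.exists_finset {p : Set (L.Formula (α ⊕ U))}
    {r : Set (L.Formula ((α ⊕ β) ⊕ U))} {φ : L.Formula (β ⊕ U)} (h : Entails p r φ) :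
    ∃ r₀ : Finset (L.Formula ((α ⊕ β) ⊕ U)), ↑r₀ ⊆ r ∧ Entails p ↑r₀ φ := by
  have hunsat : ¬ IsRealizedOver (insert (φ.relabel (Sum.map Sum.inr id)).not
      (Formula.relabel (Sum.map Sum.inl id) '' p) ∪ r) := by
    rintro ⟨M, _, _, g, x, hx⟩
    have hnφ := hx _ (Or.inl (Set.mem_insert _ _))
    refine (by simpa [Sum.elim_comp_map] using hnφ : ¬ _)
      (h M g (x ∘ Sum.inl) (x ∘ Sum.inr) (fun χ hχ => ?_) fun ρ hρ => ?_)
    · simpa [Sum.elim_comp_map] using hx _ (Or.inl (Set.mem_insert_of_mem _ ⟨χ, hχ, rfl⟩))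
    · simpa using hx ρ (Or.inr hρ)
  obtain ⟨r₀, hr₀, hunsat₀⟩ := exists_finset_not_isRealizedOver hunsat
  refine ⟨r₀, hr₀, fun M _ _ g v w hp hr => by_contra fun hφ => hunsat₀ ?_⟩
  refine ⟨M, ‹_›, ‹_›, g, Sum.elim v w, ?_⟩
  rintro _ ((rfl | ⟨χ, hχ, rfl⟩) | hρ)
  · simpa [Sum.elim_comp_map] using hφ
  · simpa [Sum.elim_comp_map] using hp χ hχ
  · exact hr _ hρ

end Entailment

end FirstOrder.Language

theorem stmt_10_general {L : FirstOrder.Language.{u, v}}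
    {U : Type w} [L.Structure U]
    (A B C : Set U) (hAB : A ⊆ B) (hBC : B ⊆ C)
    {α : Type u'} {β : Type v'}
    (p : Set (L.Formula (α ⊕ U))) (q : Set (L.Formula (β ⊕ U)))
    (r : Set (L.Formula ((α ⊕ β) ⊕ U)))
    -- `r` has parameters in `A`
    (hrA : ∀ φ ∈ r, ∃ ψ : L.Formula ((α ⊕ β) ⊕ A),
      φ = ψ.relabel (Sum.map id Subtype.val))
    -- `p` and `q` are complete over `C`
    (hpcomp : ∀ ψ : L.Formula (α ⊕ C),
      ψ.relabel (Sum.map id Subtype.val) ∈ p ∨ ψ.not.relabel (Sum.map id Subtype.val) ∈ p)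
    -- `p ∪ r` is satisfiable in an elementary extension of `U`
    (hsat : ∃ (N : Type (max u v w u' v')) (_ : L.Structure N) (f : U ↪ₑ[L] N)
      (v : α → N) (w : β → N),
      (∀ φ ∈ p, φ.Realize (Sum.elim v ⇑f)) ∧
      (∀ φ ∈ r, φ.Realize (Sum.elim (Sum.elim v w) ⇑f)))
    -- `p ∪ r` entails `q`
    (hent : ∀ (N : Type (max u v w u' v')) [L.Structure N] (f : U ↪ₑ[L] N)
      (v : α → N) (w : β → N),
      (∀ φ ∈ p, φ.Realize (Sum.elim v ⇑f)) →
      (∀ φ ∈ r, φ.Realize (Sum.elim (Sum.elim v w) ⇑f)) →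
      ∀ φ ∈ q, φ.Realize (Sum.elim w ⇑f)) :
    -- conclusion: `(p↾B) ∪ r` entails `q↾B`
    ∀ (N : Type (max u v w u' v')) [L.Structure N] (f : U ↪ₑ[L] N)
      (v : α → N) (w : β → N),
      (∀ φ ∈ p, (∃ ψ : L.Formula (α ⊕ B), φ = ψ.relabel (Sum.map id Subtype.val)) →
        φ.Realize (Sum.elim v ⇑f)) →
      (∀ φ ∈ r, φ.Realize (Sum.elim (Sum.elim v w) ⇑f)) →
      ∀ φ ∈ q, (∃ ψ : L.Formula (β ⊕ B), φ = ψ.relabel (Sum.map id Subtype.val)) →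
        φ.Realize (Sum.elim w ⇑f) := by
  classical
  intro N _ f v w hpB hr φ hφ ⟨ψ, hψ⟩
  obtain ⟨N₀, _, f₀, v₀, w₀, hp₀, hr₀⟩ := hsat
  rcases isEmpty_or_nonempty β with hβ | ⟨⟨b⟩⟩
  · exact ((f.realize_sumElim_of_isEmpty w φ).trans (f₀.realize_sumElim_of_isEmpty w₀ φ).symm).2
      (hent N₀ f₀ v₀ w₀ hp₀ hr₀ φ hφ)
  have : Nonempty N := ⟨w b⟩
  have : Nonempty N₀ := ⟨w₀ b⟩
  obtain ⟨r₀, hr₀r, hent₀⟩ :=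
    Entails.exists_finset fun M _ _ g v w hp hr => hent M g v w hp hr φ hφ
  obtain ⟨s, hs, rfl⟩ :=
    Finset.subset_set_image_iff.1 (hr₀r.trans (Formula.subset_image_preimage_relabel hAB hrA))
  subst hψ
  set θ := Formula.forallConjImp s ψ
  have hθ : ∀ (M : Type (max u v w u' v')) [L.Structure M] [Nonempty M] (g : U ↪ₑ[L] M)
      (v : α → M), (∀ χ ∈ p, χ.Realize (Sum.elim v g)) →
        (θ.relabel (Sum.map id Subtype.val)).Realize (Sum.elim v g) := by
    intro M _ _ g v hp
    rw [Formula.realize_relabel_sumMap_id, Formula.realize_forallConjImp]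
    intro w hs
    simpa [Sum.elim_comp_map] using hent₀ M g v w hp (by simpa [Sum.elim_comp_map] using hs)
  have hθp : θ.relabel (Sum.map id Subtype.val) ∈ p := by
    rw [← Formula.relabel_sumMap_inclusion hBC]
    refine Formula.relabel_mem_of_realize hpcomp hp₀ ?_
    rw [Formula.relabel_sumMap_inclusion]
    exact hθ N₀ f₀ v₀ hp₀
  have hθN := hpB _ hθp ⟨θ, rfl⟩
  rw [Formula.realize_relabel_sumMap_id, Formula.realize_forallConjImp] at hθN
  simpa [Sum.elim_comp_map] using hθN w fun ρ hρ => by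
    simpa [Sum.elim_comp_map] using hr _ (hs hρ)

/-- Let `A ⊆ B ⊆ C` be subsets of a model `U`, `p` and `q` complete types over `C`
(in variables `α` and `β`), and `r` a set of formulas with parameters in `A` in
the joint variables, such that `p ∪ r` is satisfiable (in an elementary extension
of `U`) and `p ∪ r` entails `q`. Then `(p↾B) ∪ r` entails `q↾B`, where the
restriction to `B` consists of the formulas whose parameters lie in `B`. -/
theorem stmt_10 {L : FirstOrder.Language.{u, v}} (T : L.Theory) (hT : T.IsComplete)
    {U : Type w} [L.Structure U] [U ⊨ T]
    (A B C : Set U) (hAB : A ⊆ B) (hBC : B ⊆ C)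
    {α : Type u'} {β : Type v'}
    (p : Set (L.Formula (α ⊕ U))) (q : Set (L.Formula (β ⊕ U)))
    (r : Set (L.Formula ((α ⊕ β) ⊕ U)))
    -- `p` and `q` have parameters in `C`
    (hpC : ∀ φ ∈ p, ∃ ψ : L.Formula (α ⊕ C), φ = ψ.relabel (Sum.map id Subtype.val))
    (hqC : ∀ φ ∈ q, ∃ ψ : L.Formula (β ⊕ C), φ = ψ.relabel (Sum.map id Subtype.val))
    -- `r` has parameters in `A`
    (hrA : ∀ φ ∈ r, ∃ ψ : L.Formula ((α ⊕ β) ⊕ A),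
      φ = ψ.relabel (Sum.map id Subtype.val))
    -- `p` and `q` are complete over `C`
    (hpcomp : ∀ ψ : L.Formula (α ⊕ C),
      ψ.relabel (Sum.map id Subtype.val) ∈ p ∨ ψ.not.relabel (Sum.map id Subtype.val) ∈ p)
    (hqcomp : ∀ ψ : L.Formula (β ⊕ C),
      ψ.relabel (Sum.map id Subtype.val) ∈ q ∨ ψ.not.relabel (Sum.map id Subtype.val) ∈ q)
    -- `p ∪ r` is satisfiable in an elementary extension of `U`
    (hsat : ∃ (N : Type (max u v w u' v')) (_ : L.Structure N) (f : U ↪ₑ[L] N)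
      (v : α → N) (w : β → N),
      (∀ φ ∈ p, φ.Realize (Sum.elim v ⇑f)) ∧
      (∀ φ ∈ r, φ.Realize (Sum.elim (Sum.elim v w) ⇑f)))
    -- `p ∪ r` entails `q`
    (hent : ∀ (N : Type (max u v w u' v')) [L.Structure N] (f : U ↪ₑ[L] N)
      (v : α → N) (w : β → N),
      (∀ φ ∈ p, φ.Realize (Sum.elim v ⇑f)) →
      (∀ φ ∈ r, φ.Realize (Sum.elim (Sum.elim v w) ⇑f)) →
      ∀ φ ∈ q, φ.Realize (Sum.elim w ⇑f)) :
    -- conclusion: `(p↾B) ∪ r` entails `q↾B`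
    ∀ (N : Type (max u v w u' v')) [L.Structure N] (f : U ↪ₑ[L] N)
      (v : α → N) (w : β → N),
      (∀ φ ∈ p, (∃ ψ : L.Formula (α ⊕ B), φ = ψ.relabel (Sum.map id Subtype.val)) →
        φ.Realize (Sum.elim v ⇑f)) →
      (∀ φ ∈ r, φ.Realize (Sum.elim (Sum.elim v w) ⇑f)) →
      ∀ φ ∈ q, (∃ ψ : L.Formula (β ⊕ B), φ = ψ.relabel (Sum.map id Subtype.val)) →
        φ.Realize (Sum.elim w ⇑f) :=
  stmt_10_general A B C hAB hBC p q r hrA hpcomp hsat hent
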